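/- arXiv:2207.06129 — 2 statements merged into one kernel-verified Lean document; each statement's English description precedes it below -/
import Mathlib

section
/- Let 1 ≤ p < ∞ and w ∈ A_p. Then there exists a constant C > 0 such that for every a ∈ ℝⁿ, every r > 0, and every f ∈ L^{p,w}_loc: ∫_{ℝⁿ∖B(a,r)} |f(y)|/|a−y|^n dy ≤ C·∫_r^∞ w(B(a,s))^{-1/p} ‖f‖_{L^{p,w}(B(a,s))} ds/s. -/
open MeasureTheory Metric Set
open scoped ENNReal

noncomputable section

/-- The weighted measure of a set: `w(E) = ∫_E w(x) dx`, valued in `ℝ≥0∞`. -/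
def wSet {n : ℕ} (w : EuclideanSpace ℝ (Fin n) → ℝ)
    (E : Set (EuclideanSpace ℝ (Fin n))) : ℝ≥0∞ :=
  ∫⁻ x in E, ENNReal.ofReal (w x)

/-- The weighted Lebesgue norm `‖f‖_{L^{p,w}(Ω)} = (∫_Ω |f(x)|^p w(x) dx)^{1/p}`. -/
def wLp {n : ℕ} (p : ℝ) (w f : EuclideanSpace ℝ (Fin n) → ℝ)
    (Ω : Set (EuclideanSpace ℝ (Fin n))) : ℝ≥0∞ :=
  (∫⁻ x in Ω, ENNReal.ofReal |f x| ^ p * ENNReal.ofReal (w x)) ^ (1 / p)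

/-- The weighted Lebesgue norm for an `ℝ≥0∞`-valued function. -/
def wLpE {n : ℕ} (p : ℝ) (w : EuclideanSpace ℝ (Fin n) → ℝ)
    (g : EuclideanSpace ℝ (Fin n) → ℝ≥0∞) (Ω : Set (EuclideanSpace ℝ (Fin n))) : ℝ≥0∞ :=
  (∫⁻ x in Ω, g x ^ p * ENNReal.ofReal (w x)) ^ (1 / p)

/-- The weak weighted Lebesgue norm `‖f‖_{WL^{p,w}(Ω)} = sup_{γ>0} γ·w({x ∈ Ω : |f(x)| > γ})^{1/p}`. -/
def wWeakLp {n : ℕ} (p : ℝ) (w f : EuclideanSpace ℝ (Fin n) → ℝ)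
    (Ω : Set (EuclideanSpace ℝ (Fin n))) : ℝ≥0∞ :=
  ⨆ γ : Set.Ioi (0 : ℝ),
    ENNReal.ofReal γ.1 * (wSet w {x | x ∈ Ω ∧ γ.1 < |f x|}) ^ (1 / p)

/-- The weak weighted Lebesgue norm for an `ℝ≥0∞`-valued function. -/
def wWeakLpE {n : ℕ} (p : ℝ) (w : EuclideanSpace ℝ (Fin n) → ℝ)
    (g : EuclideanSpace ℝ (Fin n) → ℝ≥0∞) (Ω : Set (EuclideanSpace ℝ (Fin n))) : ℝ≥0∞ :=
  ⨆ γ : Set.Ioi (0 : ℝ),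
    ENNReal.ofReal γ.1 * (wSet w {x | x ∈ Ω ∧ ENNReal.ofReal γ.1 < g x}) ^ (1 / p)

/-- `f ∈ L^{p,w}_loc`: `f` is measurable and `‖f‖_{L^{p,w}(B)} < ∞` on every ball. -/
def MemLocWLp {n : ℕ} (p : ℝ) (w f : EuclideanSpace ℝ (Fin n) → ℝ) : Prop :=
  Measurable f ∧ ∀ (a : EuclideanSpace ℝ (Fin n)) (r : ℝ), 0 < r → wLp p w f (ball a r) < ⊤

/-- A weight: nonnegative, measurable, locally integrable, positive a.e. -/
def IsWeight {n : ℕ} (w : EuclideanSpace ℝ (Fin n) → ℝ) : Prop :=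
  Measurable w ∧ (∀ x, 0 ≤ w x) ∧ LocallyIntegrable w volume ∧ ∀ᵐ x ∂volume, 0 < w x

/-- The Muckenhoupt class `A_p` for `1 < p`. -/
def MuckAp {n : ℕ} (p : ℝ) (w : EuclideanSpace ℝ (Fin n) → ℝ) : Prop :=
  ∃ C : ℝ, 0 < C ∧ ∀ (a : EuclideanSpace ℝ (Fin n)) (r : ℝ), 0 < r →
    ((volume (ball a r))⁻¹ * ∫⁻ x in ball a r, ENNReal.ofReal (w x)) *
      ((volume (ball a r))⁻¹ *
        ∫⁻ x in ball a r, ENNReal.ofReal (w x ^ (-(1 / (p - 1))))) ^ (p - 1) ≤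
      ENNReal.ofReal C

/-- The Muckenhoupt class `A_1`. -/
def MuckA1 {n : ℕ} (w : EuclideanSpace ℝ (Fin n) → ℝ) : Prop :=
  ∃ C : ℝ, 0 < C ∧ ∀ (a : EuclideanSpace ℝ (Fin n)) (r : ℝ), 0 < r →
    ((volume (ball a r))⁻¹ * ∫⁻ x in ball a r, ENNReal.ofReal (w x)) *
      essSup (fun x => ENNReal.ofReal (w x)⁻¹) (volume.restrict (ball a r)) ≤
      ENNReal.ofReal C

/-- The class `A_{p,q}` for `1 < p`, where `p'` is the conjugate exponent of `p`. -/
def MuckApq {n : ℕ} (p q p' : ℝ) (w : EuclideanSpace ℝ (Fin n) → ℝ) : Prop :=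
  ∃ C : ℝ, 0 < C ∧ ∀ (a : EuclideanSpace ℝ (Fin n)) (r : ℝ), 0 < r →
    ((volume (ball a r))⁻¹ * ∫⁻ x in ball a r, ENNReal.ofReal (w x ^ q)) ^ (1 / q) *
      ((volume (ball a r))⁻¹ * ∫⁻ x in ball a r, ENNReal.ofReal (w x ^ (-p'))) ^ (1 / p') ≤
      ENNReal.ofReal C

/-- The class `A_{1,q}`. -/
def MuckA1q {n : ℕ} (q : ℝ) (w : EuclideanSpace ℝ (Fin n) → ℝ) : Prop :=
  ∃ C : ℝ, 0 < C ∧ ∀ (a : EuclideanSpace ℝ (Fin n)) (r : ℝ), 0 < r →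
    ((volume (ball a r))⁻¹ * ∫⁻ x in ball a r, ENNReal.ofReal (w x ^ q)) ^ (1 / q) *
      essSup (fun x => ENNReal.ofReal (w x)⁻¹) (volume.restrict (ball a r)) ≤
      ENNReal.ofReal C

/-- The Hardy–Littlewood maximal operator. -/
def HLMax {n : ℕ} (f : EuclideanSpace ℝ (Fin n) → ℝ)
    (x : EuclideanSpace ℝ (Fin n)) : ℝ≥0∞ :=
  ⨆ r : Set.Ioi (0 : ℝ), (volume (ball x r.1))⁻¹ * ∫⁻ y in ball x r.1, ENNReal.ofReal |f y|

/-- The fractional integral operator `I_α` (applied to `|f|`, valued in `ℝ≥0∞`). -/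
def fracIntE {n : ℕ} (α : ℝ) (f : EuclideanSpace ℝ (Fin n) → ℝ)
    (x : EuclideanSpace ℝ (Fin n)) : ℝ≥0∞ :=
  ∫⁻ y, ENNReal.ofReal |f y| / ENNReal.ofReal (dist x y ^ ((n : ℝ) - α))

/-- The fractional maximal operator `M_α`. -/
def fracMax {n : ℕ} (α : ℝ) (f : EuclideanSpace ℝ (Fin n) → ℝ)
    (x : EuclideanSpace ℝ (Fin n)) : ℝ≥0∞ :=
  ⨆ r : Set.Ioi (0 : ℝ),
    (volume (ball x r.1)) ^ (α / (n : ℝ) - 1) * ∫⁻ y in ball x r.1, ENNReal.ofReal |f y|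

/-- The generalized weighted Morrey norm `‖f‖_{M^{p,w}_ψ}`. -/
def morreyNorm {n : ℕ} (p : ℝ) (w : EuclideanSpace ℝ (Fin n) → ℝ)
    (ψ : EuclideanSpace ℝ (Fin n) → ℝ → ℝ) (f : EuclideanSpace ℝ (Fin n) → ℝ) : ℝ≥0∞ :=
  ⨆ (a : EuclideanSpace ℝ (Fin n)) (r : Set.Ioi (0 : ℝ)),
    (ENNReal.ofReal (ψ a r.1))⁻¹ * wSet w (ball a r.1) ^ (-(1 / p)) * wLp p w f (ball a r.1)

/-- The generalized weighted Morrey norm for an `ℝ≥0∞`-valued function. -/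
def morreyNormE {n : ℕ} (p : ℝ) (w : EuclideanSpace ℝ (Fin n) → ℝ)
    (ψ : EuclideanSpace ℝ (Fin n) → ℝ → ℝ) (g : EuclideanSpace ℝ (Fin n) → ℝ≥0∞) : ℝ≥0∞ :=
  ⨆ (a : EuclideanSpace ℝ (Fin n)) (r : Set.Ioi (0 : ℝ)),
    (ENNReal.ofReal (ψ a r.1))⁻¹ * wSet w (ball a r.1) ^ (-(1 / p)) * wLpE p w g (ball a r.1)

/-- The generalized weighted weak Morrey norm `‖f‖_{WM^{p,w}_ψ}`. -/
def morreyWeakNorm {n : ℕ} (p : ℝ) (w : EuclideanSpace ℝ (Fin n) → ℝ)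
    (ψ : EuclideanSpace ℝ (Fin n) → ℝ → ℝ) (f : EuclideanSpace ℝ (Fin n) → ℝ) : ℝ≥0∞ :=
  ⨆ (a : EuclideanSpace ℝ (Fin n)) (r : Set.Ioi (0 : ℝ)),
    (ENNReal.ofReal (ψ a r.1))⁻¹ * wSet w (ball a r.1) ^ (-(1 / p)) * wWeakLp p w f (ball a r.1)

/-- The generalized weighted weak Morrey norm for an `ℝ≥0∞`-valued function. -/
def morreyWeakNormE {n : ℕ} (p : ℝ) (w : EuclideanSpace ℝ (Fin n) → ℝ)
    (ψ : EuclideanSpace ℝ (Fin n) → ℝ → ℝ) (g : EuclideanSpace ℝ (Fin n) → ℝ≥0∞) : ℝ≥0∞ :=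
  ⨆ (a : EuclideanSpace ℝ (Fin n)) (r : Set.Ioi (0 : ℝ)),
    (ENNReal.ofReal (ψ a r.1))⁻¹ * wSet w (ball a r.1) ^ (-(1 / p)) * wWeakLpE p w g (ball a r.1)

end

/-!
Write `|a - y|^{-n} = n ∫_{|a-y|}^∞ s^{-n-1} ds` and swap the integrals: the left-hand side is at
most `n ∫_r^∞ s^{-n-1} ∫_{B(a,s)} |f| ds`. On each ball, Hölder's inequality against the pair
`w^{1/p}`, `w^{-1/p}` together with the `A_p` condition (for `p = 1`, the `A_1` bound on
`ess sup w⁻¹`) gives `∫_B |f| ≤ C |B| w(B)^{-1/p} ‖f‖_{L^{p,w}(B)}`, and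
`s^{-n-1} |B(a,s)| = |B(0,1)| / s`.
-/

lemma lintegral_Ioi_rpow_of_lt {a c : ℝ} (ha : a < -1) (hc : 0 < c) :
    ∫⁻ s in Ioi c, ENNReal.ofReal (s ^ a) = ENNReal.ofReal (-c ^ (a + 1) / (a + 1)) := by
  rw [← ofReal_integral_eq_lintegral_ofReal (integrableOn_Ioi_rpow_of_lt ha hc)
      ((ae_restrict_iff' measurableSet_Ioi).2 (Filter.Eventually.of_forall fun s hs =>
        Real.rpow_nonneg (hc.trans hs).le a)),
    integral_Ioi_rpow_of_lt ha hc]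

lemma ofReal_rpow_neg_eq_mul_lintegral_Ioi {α d : ℝ} (hα : 0 < α) (hd : 0 < d) :
    ENNReal.ofReal (d ^ (-α)) =
      ENNReal.ofReal α * ∫⁻ s in Ioi d, ENNReal.ofReal (s ^ (-α - 1)) := by
  rw [lintegral_Ioi_rpow_of_lt (by linarith) hd, ← ENNReal.ofReal_mul hα.le, sub_add_cancel]
  congr 1
  field_simp

lemma setLIntegral_compl_ball_div_dist_rpow_le {X : Type*} [PseudoMetricSpace X]
    [MeasurableSpace X] [OpensMeasurableSpace X] (μ : Measure X) [SFinite μ]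
    {g : X → ℝ≥0∞} (hg : Measurable g) (a : X) {r α : ℝ} (hr : 0 < r) (hα : 0 < α) :
    ∫⁻ y in (ball a r)ᶜ, g y / ENNReal.ofReal (dist a y ^ α) ∂μ ≤
      ENNReal.ofReal α *
        ∫⁻ s in Ioi r, ENNReal.ofReal (s ^ (-α - 1)) * ∫⁻ y in ball a s, g y ∂μ := by
  set φ : ℝ → ℝ≥0∞ := fun s => ENNReal.ofReal (s ^ (-α - 1))
  have hφ : Measurable φ := (measurable_id.pow_const _).ennreal_ofReal
  set k : X → ℝ → ℝ≥0∞ := fun y s => g y * (Ioi (dist a y)).indicator φ s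
  have hk_meas : Measurable (Function.uncurry k) := by
    have hlt : MeasurableSet {q : X × ℝ | dist a q.1 < q.2} :=
      measurableSet_lt ((continuous_const.dist continuous_id).measurable.comp measurable_fst)
        measurable_snd
    exact (hg.comp measurable_fst).mul
      (Measurable.ite hlt (hφ.comp measurable_snd) measurable_const)
  have h_radial : ∀ y ∈ (ball a r)ᶜ,
      g y / ENNReal.ofReal (dist a y ^ α) = ENNReal.ofReal α * ∫⁻ s in Ioi r, k y s := by
    intro y hy
    have hrd : r ≤ dist a y := not_lt.1 (mt mem_ball'.2 hy)
    have hd : 0 < dist a y := hr.trans_le hrd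
    rw [lintegral_const_mul _ (hφ.indicator measurableSet_Ioi),
      lintegral_indicator measurableSet_Ioi, Measure.restrict_restrict measurableSet_Ioi,
      inter_eq_left.2 (Ioi_subset_Ioi hrd), div_eq_mul_inv,
      ← ENNReal.ofReal_inv_of_pos (by positivity), ← Real.rpow_neg hd.le,
      ofReal_rpow_neg_eq_mul_lintegral_Ioi hα hd, mul_left_comm]
  have h_slice : ∀ s, ∫⁻ y in (ball a r)ᶜ, k y s ∂μ ≤ φ s * ∫⁻ y in ball a s, g y ∂μ := by
    intro s
    calc ∫⁻ y in (ball a r)ᶜ, k y s ∂μ ≤ ∫⁻ y, k y s ∂μ := setLIntegral_le_lintegral _ _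
      _ = ∫⁻ y in ball a s, g y * φ s ∂μ := by
          rw [← lintegral_indicator measurableSet_ball]
          congr 1 with y
          by_cases hy : dist a y < s
          · simp [k, hy, indicator_of_mem (mem_ball'.2 hy)]
          · simp [k, hy, indicator_of_notMem (mt mem_ball'.1 hy)]
      _ = φ s * ∫⁻ y in ball a s, g y ∂μ := by
          rw [lintegral_mul_const' _ _ ENNReal.ofReal_ne_top, mul_comm]
  calc ∫⁻ y in (ball a r)ᶜ, g y / ENNReal.ofReal (dist a y ^ α) ∂μ
      = ENNReal.ofReal α * ∫⁻ y in (ball a r)ᶜ, (∫⁻ s in Ioi r, k y s) ∂μ := by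
        rw [setLIntegral_congr_fun measurableSet_ball.compl h_radial,
          lintegral_const_mul' _ _ ENNReal.ofReal_ne_top]
    _ = ENNReal.ofReal α * ∫⁻ s in Ioi r, ∫⁻ y in (ball a r)ᶜ, k y s ∂μ := by
        rw [lintegral_lintegral_swap hk_meas.aemeasurable]
    _ ≤ _ := by gcongr with s; exact h_slice s

lemma ofReal_rpow_neg_sub_one_mul_addHaar_ball {E : Type*} [NormedAddCommGroup E]
    [NormedSpace ℝ E] [MeasurableSpace E] [BorelSpace E] [FiniteDimensional ℝ E]
    (μ : Measure E) [μ.IsAddHaarMeasure] (a : E) {s : ℝ} (hs : 0 < s) :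
    ENNReal.ofReal (s ^ (-(Module.finrank ℝ E : ℝ) - 1)) * μ (ball a s) =
      μ (ball 0 1) * ENNReal.ofReal s⁻¹ := by
  have h_exp : -(Module.finrank ℝ E : ℝ) - 1 + Module.finrank ℝ E = -1 := by ring
  rw [Measure.addHaar_ball_of_pos μ a hs, ← mul_assoc, ← ENNReal.ofReal_mul (by positivity),
    ← Real.rpow_natCast, ← Real.rpow_add hs, h_exp, Real.rpow_neg_one, mul_comm]

lemma le_mul_div_of_inv_mul_mul_le {V W X c : ℝ≥0∞} (hV0 : V ≠ 0) (hVt : V ≠ ⊤) (hW0 : W ≠ 0)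
    (hWt : W ≠ ⊤) (h : V⁻¹ * W * X ≤ c) : X ≤ c * V / W := by
  rw [mul_assoc, ENNReal.inv_mul_le_iff hV0 hVt] at h
  rw [ENNReal.le_div_iff_mul_le (Or.inl hW0) (Or.inl hWt), mul_comm X, mul_comm c]
  exact h

namespace IsWeight

variable {n : ℕ} {w : EuclideanSpace ℝ (Fin n) → ℝ}

lemma wSet_ball_pos (hw : IsWeight w) (a : EuclideanSpace ℝ (Fin n)) {s : ℝ} (hs : 0 < s) :
    0 < wSet w (ball a s) := by
  obtain ⟨hm, -, -, hpos⟩ := hw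
  rw [pos_iff_ne_zero, wSet, Ne, lintegral_eq_zero_iff hm.ennreal_ofReal]
  intro h_zero
  have h_false : ∀ᵐ x ∂volume.restrict (ball a s), False := by
    filter_upwards [h_zero, ae_restrict_of_ae hpos] with x hx hx_pos
    exact (ENNReal.ofReal_pos.2 hx_pos).ne' hx
  rw [Filter.eventually_false_iff_eq_bot, ae_eq_bot, Measure.restrict_eq_zero] at h_false
  exact (measure_ball_pos volume a hs).ne' h_false

lemma wSet_ball_lt_top (hw : IsWeight w) (a : EuclideanSpace ℝ (Fin n)) (s : ℝ) :
    wSet w (ball a s) < ⊤ :=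
  ((hw.2.2.1.integrableOn_isCompact (isCompact_closedBall a s)).mono_set
    ball_subset_closedBall).lintegral_lt_top

end IsWeight

section Weights

variable {n : ℕ} {w : EuclideanSpace ℝ (Fin n) → ℝ}

lemma lintegral_abs_le_wLp_one_mul_essSup (hw_meas : Measurable w) (hw_pos : ∀ᵐ x, 0 < w x)
    {f : EuclideanSpace ℝ (Fin n) → ℝ} (hf : Measurable f) (E : Set (EuclideanSpace ℝ (Fin n))) :
    ∫⁻ x in E, ENNReal.ofReal |f x| ≤
      wLp 1 w f E * essSup (fun x => ENNReal.ofReal (w x)⁻¹) (volume.restrict E) := by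
  have h_meas : Measurable fun x => ENNReal.ofReal |f x| * ENNReal.ofReal (w x) :=
    hf.abs.ennreal_ofReal.mul hw_meas.ennreal_ofReal
  simp only [wLp, ENNReal.rpow_one, div_one]
  rw [← lintegral_mul_const _ h_meas]
  refine lintegral_mono_ae ?_
  filter_upwards [ae_restrict_of_ae hw_pos, ENNReal.ae_le_essSup fun x => ENNReal.ofReal (w x)⁻¹]
    with x hx hx_ess
  calc ENNReal.ofReal |f x|
      = ENNReal.ofReal |f x| * (ENNReal.ofReal (w x) * ENNReal.ofReal (w x)⁻¹) := by
        rw [← ENNReal.ofReal_mul hx.le, mul_inv_cancel₀ hx.ne', ENNReal.ofReal_one, mul_one]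
    _ ≤ _ := by rw [← mul_assoc]; gcongr

lemma lintegral_abs_le_wLp_mul_lintegral_rpow {p : ℝ} (hp : 1 < p) (hw_meas : Measurable w)
    (hw_pos : ∀ᵐ x, 0 < w x) {f : EuclideanSpace ℝ (Fin n) → ℝ} (hf : Measurable f)
    (E : Set (EuclideanSpace ℝ (Fin n))) :
    ∫⁻ x in E, ENNReal.ofReal |f x| ≤
      wLp p w f E * (∫⁻ x in E, ENNReal.ofReal (w x ^ (-(1 / (p - 1))))) ^ ((p - 1) / p) := by
  have hpq : p.HolderConjugate (p / (p - 1)) := Real.HolderConjugate.conjExponent hp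
  set F := fun x => ENNReal.ofReal |f x| * ENNReal.ofReal (w x) ^ (1 / p)
  set G := fun x => ENNReal.ofReal (w x) ^ (-(1 / p))
  have h_split : ∫⁻ x in E, ENNReal.ofReal |f x| = ∫⁻ x in E, (F * G) x := by
    refine lintegral_congr_ae ?_
    filter_upwards [ae_restrict_of_ae hw_pos] with x hx
    rw [Pi.mul_apply, mul_assoc, ← ENNReal.rpow_add _ _ (ENNReal.ofReal_pos.2 hx).ne'
      ENNReal.ofReal_ne_top, add_neg_cancel, ENNReal.rpow_zero, mul_one]
  have hF : (∫⁻ x in E, F x ^ p) ^ (1 / p) = wLp p w f E := by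
    rw [wLp]
    congr 1
    refine lintegral_congr fun x => ?_
    rw [ENNReal.mul_rpow_of_nonneg _ _ (by positivity), ← ENNReal.rpow_mul,
      one_div_mul_cancel (by positivity), ENNReal.rpow_one]
  have hG : ∫⁻ x in E, G x ^ (p / (p - 1)) =
      ∫⁻ x in E, ENNReal.ofReal (w x ^ (-(1 / (p - 1)))) := by
    refine lintegral_congr_ae ?_
    filter_upwards [ae_restrict_of_ae hw_pos] with x hx
    rw [← ENNReal.rpow_mul, ENNReal.ofReal_rpow_of_pos hx]
    congr 2
    field_simp
  calc ∫⁻ x in E, ENNReal.ofReal |f x|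
      ≤ (∫⁻ x in E, F x ^ p) ^ (1 / p) *
          (∫⁻ x in E, G x ^ (p / (p - 1))) ^ (1 / (p / (p - 1))) := by
        rw [h_split]
        exact ENNReal.lintegral_mul_le_Lp_mul_Lq _ hpq
          ((hf.abs.ennreal_ofReal).mul (hw_meas.ennreal_ofReal.pow_const _)).aemeasurable
          (hw_meas.ennreal_ofReal.pow_const _).aemeasurable
    _ = _ := by rw [hF, hG, one_div_div]

lemma MuckA1.exists_essSup_inv_le (hw : IsWeight w) (hA : MuckA1 w) :
    ∃ C : ℝ, 0 < C ∧ ∀ (a : EuclideanSpace ℝ (Fin n)) (s : ℝ), 0 < s →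
      essSup (fun x => ENNReal.ofReal (w x)⁻¹) (volume.restrict (ball a s)) ≤
        ENNReal.ofReal C * volume (ball a s) / wSet w (ball a s) := by
  obtain ⟨C, hC, hA⟩ := hA
  exact ⟨C, hC, fun a s hs => le_mul_div_of_inv_mul_mul_le (measure_ball_pos _ _ hs).ne'
    measure_ball_lt_top.ne (hw.wSet_ball_pos a hs).ne' (hw.wSet_ball_lt_top a s).ne (hA a s hs)⟩

lemma MuckAp.exists_lintegral_rpow_le {p : ℝ} (hp : 1 < p) (hw : IsWeight w) (hA : MuckAp p w) :
    ∃ C : ℝ, 0 < C ∧ ∀ (a : EuclideanSpace ℝ (Fin n)) (s : ℝ), 0 < s →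
      (∫⁻ x in ball a s, ENNReal.ofReal (w x ^ (-(1 / (p - 1))))) ^ ((p - 1) / p) ≤
        ENNReal.ofReal C * volume (ball a s) * wSet w (ball a s) ^ (-(1 / p)) := by
  obtain ⟨C, hC, hA⟩ := hA
  refine ⟨C ^ (1 / p), by positivity, fun a s hs => ?_⟩
  set V := volume (ball a s)
  set W := wSet w (ball a s)
  set S := ∫⁻ x in ball a s, ENNReal.ofReal (w x ^ (-(1 / (p - 1))))
  have hV0 : V ≠ 0 := (measure_ball_pos _ _ hs).ne'
  have hVt : V ≠ ⊤ := measure_ball_lt_top.ne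
  have hp0 : 0 < p := by linarith
  have h_avg : (V⁻¹ * S) ^ (p - 1) ≤ ENNReal.ofReal C * V / W :=
    le_mul_div_of_inv_mul_mul_le hV0 hVt (hw.wSet_ball_pos a hs).ne'
      (hw.wSet_ball_lt_top a s).ne (hA a s hs)
  calc S ^ ((p - 1) / p) = V ^ ((p - 1) / p) * ((V⁻¹ * S) ^ (p - 1)) ^ (1 / p) := by
        rw [← ENNReal.rpow_mul, mul_one_div, ← ENNReal.mul_rpow_of_nonneg _ _ (by bound),
          ← mul_assoc, ENNReal.mul_inv_cancel hV0 hVt, one_mul]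
    _ ≤ V ^ ((p - 1) / p) * (ENNReal.ofReal C * V / W) ^ (1 / p) := by gcongr
    _ = ENNReal.ofReal (C ^ (1 / p)) * (V ^ ((p - 1) / p) * V ^ (1 / p)) * W ^ (-(1 / p)) := by
        rw [ENNReal.div_rpow_of_nonneg _ _ (by positivity),
          ENNReal.mul_rpow_of_nonneg _ _ (by positivity), ENNReal.ofReal_rpow_of_pos hC,
          ENNReal.rpow_neg, div_eq_mul_inv _ (W ^ (1 / p))]
        ring
    _ = ENNReal.ofReal (C ^ (1 / p)) * V * W ^ (-(1 / p)) := by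
        rw [← ENNReal.rpow_add _ _ hV0 hVt, ← add_div, sub_add_cancel, div_self hp0.ne',
          ENNReal.rpow_one]

lemma exists_lintegral_ball_le_mul_wSet_rpow_mul_wLp {p : ℝ} (hp : 1 ≤ p) (hw : IsWeight w)
    (hAp : (1 < p → MuckAp p w) ∧ (p = 1 → MuckA1 w)) :
    ∃ C : ℝ, 0 < C ∧ ∀ (a : EuclideanSpace ℝ (Fin n)) (s : ℝ), 0 < s →
      ∀ f : EuclideanSpace ℝ (Fin n) → ℝ, Measurable f →
        ∫⁻ y in ball a s, ENNReal.ofReal |f y| ≤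
          ENNReal.ofReal C * volume (ball a s) *
            (wSet w (ball a s) ^ (-(1 / p)) * wLp p w f (ball a s)) := by
  obtain ⟨hw_meas, -, -, hw_pos⟩ := id hw
  rcases hp.eq_or_lt with rfl | hp
  · obtain ⟨C, hC, h_ess⟩ := hAp.2 rfl |>.exists_essSup_inv_le hw
    refine ⟨C, hC, fun a s hs f hf => ?_⟩
    calc ∫⁻ y in ball a s, ENNReal.ofReal |f y|
        ≤ wLp 1 w f (ball a s) * (ENNReal.ofReal C * volume (ball a s) / wSet w (ball a s)) :=
          (lintegral_abs_le_wLp_one_mul_essSup hw_meas hw_pos hf _).trans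
            (by gcongr; exact h_ess a s hs)
      _ = _ := by rw [div_eq_mul_inv, ← ENNReal.rpow_neg_one, div_one]; ring
  · obtain ⟨C, hC, h_dual⟩ := hAp.1 hp |>.exists_lintegral_rpow_le hp hw
    refine ⟨C, hC, fun a s hs f hf => ?_⟩
    calc ∫⁻ y in ball a s, ENNReal.ofReal |f y|
        ≤ wLp p w f (ball a s) *
            (ENNReal.ofReal C * volume (ball a s) * wSet w (ball a s) ^ (-(1 / p))) :=
          (lintegral_abs_le_wLp_mul_lintegral_rpow hp hw_meas hw_pos hf _).trans
            (by gcongr; exact h_dual a s hs)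
      _ = _ := by ring

lemma exists_rpow_neg_sub_one_mul_lintegral_ball_le {p : ℝ} (hp : 1 ≤ p) (hw : IsWeight w)
    (hAp : (1 < p → MuckAp p w) ∧ (p = 1 → MuckA1 w)) :
    ∃ C : ℝ, 0 < C ∧ ∀ (a : EuclideanSpace ℝ (Fin n)) (s : ℝ), 0 < s →
      ∀ f : EuclideanSpace ℝ (Fin n) → ℝ, Measurable f →
        ENNReal.ofReal (s ^ (-(n : ℝ) - 1)) * ∫⁻ y in ball a s, ENNReal.ofReal |f y| ≤
          ENNReal.ofReal C *
            (wSet w (ball a s) ^ (-(1 / p)) * wLp p w f (ball a s) * ENNReal.ofReal s⁻¹) := by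
  obtain ⟨C, hC, h_ball⟩ := exists_lintegral_ball_le_mul_wSet_rpow_mul_wLp hp hw hAp
  set v := volume (ball (0 : EuclideanSpace ℝ (Fin n)) 1)
  have hv : v ≠ ⊤ := measure_ball_lt_top.ne
  have hv_pos : 0 < v.toReal := ENNReal.toReal_pos (measure_ball_pos _ _ one_pos).ne' hv
  refine ⟨C * v.toReal, by positivity, fun a s hs f hf => ?_⟩
  have h_scale : ENNReal.ofReal (s ^ (-(n : ℝ) - 1)) * volume (ball a s) =
      v * ENNReal.ofReal s⁻¹ := by
    simpa using ofReal_rpow_neg_sub_one_mul_addHaar_ball volume a hs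
  calc ENNReal.ofReal (s ^ (-(n : ℝ) - 1)) * ∫⁻ y in ball a s, ENNReal.ofReal |f y|
      ≤ ENNReal.ofReal (s ^ (-(n : ℝ) - 1)) * (ENNReal.ofReal C * volume (ball a s) *
          (wSet w (ball a s) ^ (-(1 / p)) * wLp p w f (ball a s))) := by
        gcongr; exact h_ball a s hs f hf
    _ = ENNReal.ofReal C * (ENNReal.ofReal (s ^ (-(n : ℝ) - 1)) * volume (ball a s)) *
          (wSet w (ball a s) ^ (-(1 / p)) * wLp p w f (ball a s)) := by ring
    _ = _ := by
        rw [h_scale, ENNReal.ofReal_mul hC.le, ENNReal.ofReal_toReal hv]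
        ring

end Weights

/-- Let `1 ≤ p < ∞` and `w ∈ A_p`. Then there is `C > 0` such that for every
`a ∈ ℝⁿ`, `r > 0` and `f ∈ L^{p,w}_loc`:
`∫_{ℝⁿ∖B(a,r)} |f(y)|/|a−y|^n dy ≤ C·∫_r^∞ w(B(a,s))^{-1/p} ‖f‖_{L^{p,w}(B(a,s))} ds/s`. -/
theorem statement3 {n : ℕ} (p : ℝ) (hp : 1 ≤ p)
    (w : EuclideanSpace ℝ (Fin n) → ℝ) (hw : IsWeight w)
    (hAp : (1 < p → MuckAp p w) ∧ (p = 1 → MuckA1 w)) :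
    ∃ C : ℝ, 0 < C ∧
      ∀ (a : EuclideanSpace ℝ (Fin n)) (r : ℝ) (f : EuclideanSpace ℝ (Fin n) → ℝ),
        0 < r → MemLocWLp p w f →
        (∫⁻ y in (ball a r)ᶜ, ENNReal.ofReal |f y| / ENNReal.ofReal (dist a y ^ n)) ≤
          ENNReal.ofReal C *
            ∫⁻ s in Set.Ioi r,
              wSet w (ball a s) ^ (-(1 / p)) * wLp p w f (ball a s) *
                ENNReal.ofReal s⁻¹ := by
  rcases Nat.eq_zero_or_pos n with rfl | hn
  · refine ⟨1, one_pos, fun a r f hr _ => ?_⟩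
    have h_empty : (ball a r)ᶜ = ∅ := by ext y; simp [Subsingleton.elim y a, hr]
    simp [h_empty]
  obtain ⟨C, hC, h_shell⟩ := exists_rpow_neg_sub_one_mul_lintegral_ball_le hp hw hAp
  refine ⟨n * C, by positivity, fun a r f hr hf => ?_⟩
  calc ∫⁻ y in (ball a r)ᶜ, ENNReal.ofReal |f y| / ENNReal.ofReal (dist a y ^ n)
      = ∫⁻ y in (ball a r)ᶜ, ENNReal.ofReal |f y| / ENNReal.ofReal (dist a y ^ (n : ℝ)) := by
        simp_rw [Real.rpow_natCast]
    _ ≤ ENNReal.ofReal n * ∫⁻ s in Ioi r,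
          ENNReal.ofReal (s ^ (-(n : ℝ) - 1)) * ∫⁻ y in ball a s, ENNReal.ofReal |f y| :=
        setLIntegral_compl_ball_div_dist_rpow_le volume hf.1.abs.ennreal_ofReal a hr
          (by exact_mod_cast hn)
    _ ≤ ENNReal.ofReal n * ∫⁻ s in Ioi r, ENNReal.ofReal C *
          (wSet w (ball a s) ^ (-(1 / p)) * wLp p w f (ball a s) * ENNReal.ofReal s⁻¹) := by
        gcongr 1
        exact setLIntegral_mono' measurableSet_Ioi fun s hs => h_shell a s (hr.trans hs) f hf.1
    _ = _ := by
        rw [lintegral_const_mul' _ _ ENNReal.ofReal_ne_top, ← mul_assoc,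
          ← ENNReal.ofReal_mul (by positivity)]
end

section
/- Let w ∈ A_1 and let M be the Hardy–Littlewood maximal operator. Then there exists a constant C > 0, independent of f, a, and r, such that for every a ∈ ℝⁿ, r > 0, and f ∈ L^{1,w}_loc: ‖Mf‖_{WL^{1,w}(B(a,r))} ≤ C·w(B(a,r))·sup_{r<t<∞} w(B(a,t))^{-1} ‖f‖_{L^{1,w}(B(a,t))}. -/
open MeasureTheory Metric Set
open scoped ENNReal

/-!
Let `S` be the supremum on the right and `η` a level. The `A₁` condition bounds the Lebesgue
average of any `g ≥ 0` over a ball by `C` times its `w`-average, and makes `w` doubling. If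
`η ≤ C 2ⁿ S` the estimate is trivial. Otherwise a ball of radius `ρ > r` centred in `B(a, r)`
lies in `B(a, ρ + r)`, on which the average of `|f|` is at most `C S`, so its own `|f|`-average
is at most `C 2ⁿ S < η`. Hence each point of `{Mf > η} ∩ B(a, r)` is the centre of a ball of
radius at most `r` on which the average of `|f|` exceeds `η`. A disjoint Vitali subfamily of
these balls, the doubling of `w` and the `A₁` bound on each ball give
`η w({Mf > η} ∩ B(a, r)) ≲ ∫_{B(a, 2r)} |f| w ≤ w(B(a, 2r)) S ≲ w(B(a, r)) S`.
-/

def MuckA1With {n : ℕ} (D : ℝ≥0∞) (w : EuclideanSpace ℝ (Fin n) → ℝ) : Prop :=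
  ∀ (a : EuclideanSpace ℝ (Fin n)) (r : ℝ), 0 < r →
    ((volume (ball a r))⁻¹ * ∫⁻ x in ball a r, ENNReal.ofReal (w x)) *
      essSup (fun x => ENNReal.ofReal (w x)⁻¹) (volume.restrict (ball a r)) ≤ D

section

variable {n : ℕ} {w : EuclideanSpace ℝ (Fin n) → ℝ}

lemma volume_ball_mul_of_pos (x : EuclideanSpace ℝ (Fin n)) {k : ℝ} (hk : 0 < k) (s : ℝ) :
    volume (ball x (k * s)) = ENNReal.ofReal k ^ n * volume (ball x s) := by
  rw [Measure.addHaar_ball_mul_of_pos volume x hk s, Measure.addHaar_ball_center volume x s,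
    finrank_euclideanSpace_fin, ENNReal.ofReal_pow hk.le]

lemma wSet_eq_withDensity (w : EuclideanSpace ℝ (Fin n) → ℝ) (s : Set (EuclideanSpace ℝ (Fin n))) :
    wSet w s = volume.withDensity (fun x => ENNReal.ofReal (w x)) s :=
  (withDensity_apply' _ s).symm

lemma wLp_one (w f : EuclideanSpace ℝ (Fin n) → ℝ) (Ω : Set (EuclideanSpace ℝ (Fin n))) :
    wLp 1 w f Ω = ∫⁻ x in Ω, ENNReal.ofReal |f x| * ENNReal.ofReal (w x) := by
  simp [wLp]

lemma wWeakLpE_one_le {g : EuclideanSpace ℝ (Fin n) → ℝ≥0∞} {Ω : Set (EuclideanSpace ℝ (Fin n))}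
    {A : ℝ≥0∞} (h : ∀ η : ℝ≥0∞, η * wSet w {x | x ∈ Ω ∧ η < g x} ≤ A) :
    wWeakLpE 1 w g Ω ≤ A :=
  iSup_le fun γ => by simpa using h (ENNReal.ofReal γ)

namespace IsWeight

lemma wSet_ball_ne_zero (hw : IsWeight w) (c : EuclideanSpace ℝ (Fin n)) {s : ℝ} (hs : 0 < s) :
    wSet w (ball c s) ≠ 0 := by
  rw [wSet_eq_withDensity]
  refine fun h => (measure_ball_pos volume c hs).ne' (withDensity_absolutelyContinuous' ?_ ?_ h)
  · exact hw.1.ennreal_ofReal.aemeasurable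
  · filter_upwards [hw.2.2.2] with x hx using ENNReal.ofReal_pos.2 hx |>.ne'

lemma wSet_ball_ne_top (hw : IsWeight w) (c : EuclideanSpace ℝ (Fin n)) (s : ℝ) :
    wSet w (ball c s) ≠ ⊤ :=
  ne_top_of_le_ne_top
    (hw.2.2.1.integrableOn_isCompact (isCompact_closedBall c s)).setLIntegral_lt_top.ne
    (lintegral_mono_set ball_subset_closedBall)

lemma lintegral_le_essSup_inv_mul (hw : IsWeight w) {g : EuclideanSpace ℝ (Fin n) → ℝ≥0∞}
    (hg : Measurable g) (s : Set (EuclideanSpace ℝ (Fin n))) :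
    ∫⁻ x in s, g x ≤ essSup (fun x => ENNReal.ofReal (w x)⁻¹) (volume.restrict s) *
      ∫⁻ x in s, g x * ENNReal.ofReal (w x) := by
  set σ := essSup (fun x => ENNReal.ofReal (w x)⁻¹) (volume.restrict s)
  rw [← lintegral_const_mul σ (f := fun x => g x * ENNReal.ofReal (w x))
    (hg.mul hw.1.ennreal_ofReal)]
  refine lintegral_mono_ae ?_
  filter_upwards [ae_restrict_of_ae hw.2.2.2, ENNReal.ae_le_essSup (μ := volume.restrict s)
    (fun x => ENNReal.ofReal (w x)⁻¹)] with x hx hxσ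
  have hw0 : ENNReal.ofReal (w x) ≠ 0 := (ENNReal.ofReal_pos.2 hx).ne'
  calc g x = (ENNReal.ofReal (w x))⁻¹ * (g x * ENNReal.ofReal (w x)) := by
        rw [mul_comm (g x), ← mul_assoc, ENNReal.inv_mul_cancel hw0 ENNReal.ofReal_ne_top, one_mul]
    _ ≤ σ * (g x * ENNReal.ofReal (w x)) := by
        gcongr
        rwa [← ENNReal.ofReal_inv_of_pos hx]

lemma volume_le_essSup_inv_mul_wSet (hw : IsWeight w) (s : Set (EuclideanSpace ℝ (Fin n))) :
    volume s ≤ essSup (fun x => ENNReal.ofReal (w x)⁻¹) (volume.restrict s) * wSet w s := by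
  simpa [wSet] using hw.lintegral_le_essSup_inv_mul measurable_const (g := 1) s

end IsWeight

namespace MuckA1With

variable {D : ℝ≥0∞}

lemma wSet_mul_essSup_le (hA1 : MuckA1With D w) (c : EuclideanSpace ℝ (Fin n)) {s : ℝ}
    (hs : 0 < s) :
    wSet w (ball c s) * essSup (fun x => ENNReal.ofReal (w x)⁻¹) (volume.restrict (ball c s)) ≤
      D * volume (ball c s) := by
  have hV0 : volume (ball c s) ≠ 0 := (measure_ball_pos volume c hs).ne'
  calc wSet w (ball c s) * essSup (fun x => ENNReal.ofReal (w x)⁻¹) (volume.restrict (ball c s))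
      = ((volume (ball c s))⁻¹ * wSet w (ball c s) *
          essSup (fun x => ENNReal.ofReal (w x)⁻¹) (volume.restrict (ball c s))) *
        volume (ball c s) := by
        rw [mul_comm _ (volume (ball c s)), ← mul_assoc, ← mul_assoc,
          ENNReal.mul_inv_cancel hV0 measure_ball_lt_top.ne, one_mul]
    _ ≤ D * volume (ball c s) := by gcongr; exact hA1 c s hs

lemma lintegral_mul_wSet_le (hA1 : MuckA1With D w) (hw : IsWeight w)
    {g : EuclideanSpace ℝ (Fin n) → ℝ≥0∞} (hg : Measurable g) (c : EuclideanSpace ℝ (Fin n))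
    {s : ℝ} (hs : 0 < s) :
    (∫⁻ x in ball c s, g x) * wSet w (ball c s) ≤
      D * volume (ball c s) * ∫⁻ x in ball c s, g x * ENNReal.ofReal (w x) := by
  set σ := essSup (fun x => ENNReal.ofReal (w x)⁻¹) (volume.restrict (ball c s))
  calc (∫⁻ x in ball c s, g x) * wSet w (ball c s)
      ≤ (σ * ∫⁻ x in ball c s, g x * ENNReal.ofReal (w x)) * wSet w (ball c s) := by
        gcongr; exact hw.lintegral_le_essSup_inv_mul hg _
    _ = (wSet w (ball c s) * σ) * ∫⁻ x in ball c s, g x * ENNReal.ofReal (w x) := by ring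
    _ ≤ D * volume (ball c s) * ∫⁻ x in ball c s, g x * ENNReal.ofReal (w x) :=
        mul_le_mul_left (hA1.wSet_mul_essSup_le c hs) _

lemma volume_mul_wSet_le (hA1 : MuckA1With D w) (hw : IsWeight w)
    {c c' : EuclideanSpace ℝ (Fin n)} {s s' : ℝ} (hsub : ball c s ⊆ ball c' s') (hs' : 0 < s') :
    volume (ball c s) * wSet w (ball c' s') ≤ D * volume (ball c' s') * wSet w (ball c s) := by
  set σ := fun t : Set (EuclideanSpace ℝ (Fin n)) =>
    essSup (fun x => ENNReal.ofReal (w x)⁻¹) (volume.restrict t)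
  have hσ : σ (ball c s) ≤ σ (ball c' s') :=
    essSup_mono_measure (Measure.absolutelyContinuous_of_le (Measure.restrict_mono hsub le_rfl))
  calc volume (ball c s) * wSet w (ball c' s')
      ≤ (σ (ball c s) * wSet w (ball c s)) * wSet w (ball c' s') := by
        gcongr; exact hw.volume_le_essSup_inv_mul_wSet _
    _ ≤ (σ (ball c' s') * wSet w (ball c s)) * wSet w (ball c' s') := by gcongr
    _ = (wSet w (ball c' s') * σ (ball c' s')) * wSet w (ball c s) := by ring
    _ ≤ D * volume (ball c' s') * wSet w (ball c s) :=
        mul_le_mul_left (hA1.wSet_mul_essSup_le c' hs') _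

lemma wSet_ball_mul_le (hA1 : MuckA1With D w) (hw : IsWeight w) (c : EuclideanSpace ℝ (Fin n))
    {s k : ℝ} (hs : 0 < s) (hk : 1 ≤ k) :
    wSet w (ball c (k * s)) ≤ D * ENNReal.ofReal k ^ n * wSet w (ball c s) := by
  have h := hA1.volume_mul_wSet_le hw (c := c) (ball_subset_ball (le_mul_of_one_le_left hs.le hk))
    (by positivity)
  rw [volume_ball_mul_of_pos c (by positivity) s] at h
  refine (ENNReal.mul_le_mul_iff_right (measure_ball_pos volume c hs).ne'
    measure_ball_lt_top.ne).1 ?_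
  calc volume (ball c s) * wSet w (ball c (k * s))
      ≤ D * (ENNReal.ofReal k ^ n * volume (ball c s)) * wSet w (ball c s) := h
    _ = volume (ball c s) * (D * ENNReal.ofReal k ^ n * wSet w (ball c s)) := by ring

lemma mul_wSet_ball_le_of_mul_volume_le (hA1 : MuckA1With D w) (hw : IsWeight w)
    {g : EuclideanSpace ℝ (Fin n) → ℝ≥0∞} (hg : Measurable g) {c : EuclideanSpace ℝ (Fin n)}
    {s : ℝ} (hs : 0 < s) {η : ℝ≥0∞} (hη : η * volume (ball c s) ≤ ∫⁻ x in ball c s, g x) :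
    η * wSet w (ball c s) ≤ D * ∫⁻ x in ball c s, g x * ENNReal.ofReal (w x) := by
  refine (ENNReal.mul_le_mul_iff_left (measure_ball_pos volume c hs).ne'
    measure_ball_lt_top.ne).1 ?_
  calc η * wSet w (ball c s) * volume (ball c s)
      = η * volume (ball c s) * wSet w (ball c s) := by ring
    _ ≤ (∫⁻ x in ball c s, g x) * wSet w (ball c s) := mul_le_mul_left hη _
    _ ≤ D * volume (ball c s) * ∫⁻ x in ball c s, g x * ENNReal.ofReal (w x) :=
        hA1.lintegral_mul_wSet_le hw hg c hs
    _ = D * (∫⁻ x in ball c s, g x * ENNReal.ofReal (w x)) * volume (ball c s) := by ring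

lemma mul_wSet_le_of_forall_mul_volume_le (hA1 : MuckA1With D w) (hw : IsWeight w)
    {g : EuclideanSpace ℝ (Fin n) → ℝ≥0∞} (hg : Measurable g)
    {S U : Set (EuclideanSpace ℝ (Fin n))} {ρ : EuclideanSpace ℝ (Fin n) → ℝ} {R : ℝ}
    {η : ℝ≥0∞} (hρ : ∀ x ∈ S, 0 < ρ x) (hρR : ∀ x ∈ S, ρ x ≤ R)
    (hU : ∀ x ∈ S, ball x (ρ x) ⊆ U)
    (hη : ∀ x ∈ S, η * volume (ball x (ρ x)) ≤ ∫⁻ y in ball x (ρ x), g y) :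
    η * wSet w S ≤ D ^ 2 * 5 ^ n * ∫⁻ x in U, g x * ENNReal.ofReal (w x) := by
  obtain ⟨u, huS, hdisj, hcover⟩ :=
    Vitali.exists_disjoint_subfamily_covering_enlargement_closedBall S id ρ R hρR 4
      (by norm_num)
  have hdisj' : u.PairwiseDisjoint fun b => ball b (ρ b) :=
    hdisj.mono fun b => ball_subset_closedBall
  have hu : u.Countable := hdisj'.countable_of_isOpen (fun _ _ => isOpen_ball)
    fun b hb => ⟨b, mem_ball_self (hρ b (huS hb))⟩
  have hS : S ⊆ ⋃ b ∈ u, ball b (5 * ρ b) := by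
    intro x hx
    obtain ⟨b, hbu, hxb⟩ := hcover x hx
    exact mem_biUnion hbu (closedBall_subset_ball (by linarith [hρ b (huS hbu)])
      (hxb (mem_closedBall_self (hρ x hx).le)))
  set μ := volume.withDensity fun x => ENNReal.ofReal (w x)
  set ν := volume.withDensity fun x => g x * ENNReal.ofReal (w x)
  have hν : ∀ s, ν s = ∫⁻ x in s, g x * ENNReal.ofReal (w x) := fun s => withDensity_apply' _ s
  calc η * wSet w S ≤ η * ∑' b : u, μ (ball b (5 * ρ b)) := by
        rw [wSet_eq_withDensity]
        gcongr
        exact (measure_mono hS).trans (measure_biUnion_le μ hu _)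
    _ ≤ η * ∑' b : u, D * 5 ^ n * wSet w (ball b (ρ b)) := by
        gcongr with b
        rw [← wSet_eq_withDensity]
        simpa using hA1.wSet_ball_mul_le hw b (hρ b (huS b.2)) (by norm_num : (1 : ℝ) ≤ 5)
    _ = D * 5 ^ n * ∑' b : u, η * wSet w (ball b (ρ b)) := by
        rw [ENNReal.tsum_mul_left, ENNReal.tsum_mul_left]; ring
    _ ≤ D * 5 ^ n * ∑' b : u, D * ν (ball b (ρ b)) := by
        refine mul_le_mul_right (ENNReal.tsum_le_tsum fun b => ?_) _
        rw [hν]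
        exact hA1.mul_wSet_ball_le_of_mul_volume_le hw hg (hρ b (huS b.2)) (hη b (huS b.2))
    _ = D ^ 2 * 5 ^ n * ν (⋃ b ∈ u, ball b (ρ b)) := by
        rw [ENNReal.tsum_mul_left, ← measure_biUnion hu hdisj' fun _ _ => measurableSet_ball]
        ring
    _ ≤ D ^ 2 * 5 ^ n * ∫⁻ x in U, g x * ENNReal.ofReal (w x) := by
        rw [← hν]
        gcongr
        exact iUnion₂_subset fun b hb => hU b (huS hb)

lemma lintegral_ball_le_of_lt (hA1 : MuckA1With D w) (hw : IsWeight w)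
    {g : EuclideanSpace ℝ (Fin n) → ℝ≥0∞} (hg : Measurable g) {a x : EuclideanSpace ℝ (Fin n)}
    {r ρ : ℝ} {S : ℝ≥0∞} (hx : x ∈ ball a r) (hrρ : r < ρ)
    (hS : ∀ t, r < t → ∫⁻ y in ball a t, g y * ENNReal.ofReal (w y) ≤ wSet w (ball a t) * S) :
    ∫⁻ y in ball x ρ, g y ≤ D * 2 ^ n * volume (ball x ρ) * S := by
  have hr : 0 < r := dist_nonneg.trans_lt hx
  have ht : 0 < ρ + r := by linarith
  have hvol : volume (ball a (ρ + r)) ≤ 2 ^ n * volume (ball x ρ) :=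
    calc volume (ball a (ρ + r)) ≤ volume (ball a (2 * ρ)) :=
          measure_mono (ball_subset_ball (by linarith))
      _ = 2 ^ n * volume (ball x ρ) := by
          rw [volume_ball_mul_of_pos a two_pos, Measure.addHaar_ball_center volume a,
            ← Measure.addHaar_ball_center volume x, ENNReal.ofReal_ofNat]
  have hbig : ∫⁻ y in ball a (ρ + r), g y ≤ D * volume (ball a (ρ + r)) * S := by
    refine (ENNReal.mul_le_mul_iff_left (hw.wSet_ball_ne_zero a ht)
      (hw.wSet_ball_ne_top a _)).1 ?_
    calc (∫⁻ y in ball a (ρ + r), g y) * wSet w (ball a (ρ + r))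
        ≤ D * volume (ball a (ρ + r)) * ∫⁻ y in ball a (ρ + r), g y * ENNReal.ofReal (w y) :=
          hA1.lintegral_mul_wSet_le hw hg a ht
      _ ≤ D * volume (ball a (ρ + r)) * (wSet w (ball a (ρ + r)) * S) := by
          gcongr; exact hS _ (by linarith)
      _ = D * volume (ball a (ρ + r)) * S * wSet w (ball a (ρ + r)) := by ring
  calc ∫⁻ y in ball x ρ, g y ≤ ∫⁻ y in ball a (ρ + r), g y :=
        lintegral_mono_set (ball_subset_ball' (by linarith [mem_ball.1 hx]))
    _ ≤ D * volume (ball a (ρ + r)) * S := hbig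
    _ ≤ D * (2 ^ n * volume (ball x ρ)) * S := by gcongr
    _ = D * 2 ^ n * volume (ball x ρ) * S := by ring

lemma mul_wSet_HLMax_levelSet_le (hA1 : MuckA1With D w) (hw : IsWeight w)
    {f : EuclideanSpace ℝ (Fin n) → ℝ} (hf : Measurable f) {a : EuclideanSpace ℝ (Fin n)}
    {r : ℝ} (hr : 0 < r) {S : ℝ≥0∞}
    (hS : ∀ t, r < t → ∫⁻ y in ball a t, ENNReal.ofReal |f y| * ENNReal.ofReal (w y) ≤
      wSet w (ball a t) * S) (η : ℝ≥0∞) :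
    η * wSet w {x | x ∈ ball a r ∧ η < HLMax f x} ≤
      (D * 2 ^ n + D ^ 3 * 10 ^ n) * wSet w (ball a r) * S := by
  set E := {x | x ∈ ball a r ∧ η < HLMax f x}
  have hg : Measurable fun y => ENNReal.ofReal |f y| := hf.abs.ennreal_ofReal
  rcases le_or_gt η (D * 2 ^ n * S) with hη | hη
  · calc η * wSet w E ≤ D * 2 ^ n * S * wSet w (ball a r) :=
          mul_le_mul' hη (lintegral_mono_set fun x hx => hx.1)
      _ ≤ (D * 2 ^ n + D ^ 3 * 10 ^ n) * wSet w (ball a r) * S := by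
          rw [add_mul, add_mul, mul_right_comm]; exact le_self_add
  have hrad : ∀ x ∈ E, ∃ ρ, 0 < ρ ∧ ρ ≤ r ∧
      η * volume (ball x ρ) ≤ ∫⁻ y in ball x ρ, ENNReal.ofReal |f y| := by
    rintro x ⟨hx, hMx⟩
    obtain ⟨⟨ρ, hρ⟩, hηρ⟩ := lt_iSup_iff.1 hMx
    have hV0 : volume (ball x ρ) ≠ 0 := (measure_ball_pos volume x hρ).ne'
    rw [← ENNReal.div_eq_inv_mul] at hηρ
    refine ⟨ρ, hρ, ?_, (ENNReal.le_div_iff_mul_le (Or.inl hV0)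
      (Or.inl measure_ball_lt_top.ne)).1 hηρ.le⟩
    by_contra! hrρ
    refine hηρ.not_ge (hη.le.trans' ?_)
    rw [ENNReal.div_le_iff hV0 measure_ball_lt_top.ne]
    calc ∫⁻ y in ball x ρ, ENNReal.ofReal |f y| ≤ D * 2 ^ n * volume (ball x ρ) * S :=
          hA1.lintegral_ball_le_of_lt hw hg hx hrρ hS
      _ = D * 2 ^ n * S * volume (ball x ρ) := by ring
  choose! ρ hρ hρr hηρ using hrad
  calc η * wSet w E
      ≤ D ^ 2 * 5 ^ n * ∫⁻ y in ball a (2 * r), ENNReal.ofReal |f y| * ENNReal.ofReal (w y) :=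
        hA1.mul_wSet_le_of_forall_mul_volume_le hw hg hρ hρr
          (fun x hx => ball_subset_ball' (by linarith [mem_ball.1 hx.1, hρr x hx])) hηρ
    _ ≤ D ^ 2 * 5 ^ n * (wSet w (ball a (2 * r)) * S) := by gcongr; exact hS _ (by linarith)
    _ ≤ D ^ 2 * 5 ^ n * (D * 2 ^ n * wSet w (ball a r) * S) := by
        gcongr
        simpa using hA1.wSet_ball_mul_le hw a hr (by norm_num : (1 : ℝ) ≤ 2)
    _ = D ^ 3 * 10 ^ n * wSet w (ball a r) * S := by
        rw [show (10 : ℝ≥0∞) = 5 * 2 by norm_num, mul_pow]; ring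
    _ ≤ (D * 2 ^ n + D ^ 3 * 10 ^ n) * wSet w (ball a r) * S := by
        rw [add_mul, add_mul]; exact le_add_self

end MuckA1With

lemma IsWeight.lintegral_le_wSet_mul_iSup (hw : IsWeight w) (f : EuclideanSpace ℝ (Fin n) → ℝ)
    (a : EuclideanSpace ℝ (Fin n)) {r t : ℝ} (hr : 0 ≤ r) (hrt : r < t) :
    ∫⁻ y in ball a t, ENNReal.ofReal |f y| * ENNReal.ofReal (w y) ≤
      wSet w (ball a t) * ⨆ t : Set.Ioi r, (wSet w (ball a t.1))⁻¹ * wLp 1 w f (ball a t.1) :=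
  calc ∫⁻ y in ball a t, ENNReal.ofReal |f y| * ENNReal.ofReal (w y)
      = wSet w (ball a t) * ((wSet w (ball a t))⁻¹ * wLp 1 w f (ball a t)) := by
        rw [← mul_assoc, ENNReal.mul_inv_cancel (hw.wSet_ball_ne_zero a (hr.trans_lt hrt))
          (hw.wSet_ball_ne_top a t), one_mul, wLp_one]
    _ ≤ _ := mul_le_mul_right (le_iSup (fun t : Set.Ioi r =>
        (wSet w (ball a t.1))⁻¹ * wLp 1 w f (ball a t.1)) ⟨t, hrt⟩) _

end

/-- Let `w ∈ A_1`. Then there is `C > 0`, independent of `f`, `a`, `r`,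
such that for every `a ∈ ℝⁿ`, `r > 0` and `f ∈ L^{1,w}_loc`:
`‖Mf‖_{WL^{1,w}(B(a,r))} ≤ C·w(B(a,r))·sup_{r<t<∞} w(B(a,t))⁻¹‖f‖_{L^{1,w}(B(a,t))}`. -/
theorem statement5 {n : ℕ}
    (w : EuclideanSpace ℝ (Fin n) → ℝ) (hw : IsWeight w) (hA1 : MuckA1 w) :
    ∃ C : ℝ, 0 < C ∧
      ∀ (a : EuclideanSpace ℝ (Fin n)) (r : ℝ) (f : EuclideanSpace ℝ (Fin n) → ℝ),
        0 < r → MemLocWLp 1 w f →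
        wWeakLpE 1 w (HLMax f) (ball a r) ≤
          ENNReal.ofReal C * wSet w (ball a r) *
            ⨆ t : Set.Ioi r, (wSet w (ball a t.1))⁻¹ * wLp 1 w f (ball a t.1) := by
  obtain ⟨C₀, hC₀, hA1⟩ := hA1
  refine ⟨C₀ * 2 ^ n + C₀ ^ 3 * 10 ^ n, by positivity, fun a r f hr hf => ?_⟩
  have hC : ENNReal.ofReal (C₀ * 2 ^ n + C₀ ^ 3 * 10 ^ n) =
      ENNReal.ofReal C₀ * 2 ^ n + ENNReal.ofReal C₀ ^ 3 * 10 ^ n := by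
    rw [ENNReal.ofReal_add (by positivity) (by positivity), ENNReal.ofReal_mul hC₀.le,
      ENNReal.ofReal_mul (by positivity), ENNReal.ofReal_pow hC₀.le, ENNReal.ofReal_pow two_pos.le,
      ENNReal.ofReal_pow (by norm_num), ENNReal.ofReal_ofNat, ENNReal.ofReal_ofNat]
  rw [hC]
  exact wWeakLpE_one_le <| MuckA1With.mul_wSet_HLMax_levelSet_le hA1 hw hf.1 hr
    fun t ht => hw.lintegral_le_wSet_mul_iSup f a hr.le ht
end
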